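/- Let n ≥ 2 be an even integer, let F be the normalized DFT matrix with entries F_{jk} = e^{2πi jk/n}/√n, and let γ(1/2) = F D(1/2) F* where D(1/2) = diag(e^{πik/n})_{k=0}^{n-1}. Then perm(γ(1/2)) = 0. -/
import Mathlib


open Matrix

/-- The normalized DFT matrix: `F_{jk} = e^{2πi jk/n}/√n`. -/
noncomputable def dftMatrix (n : ℕ) : Matrix (Fin n) (Fin n) ℂ :=
  Matrix.of fun j k : Fin n =>
    Complex.exp (2 * (Real.pi : ℂ) * Complex.I * ((j : ℕ) : ℂ) * ((k : ℕ) : ℂ) / (n : ℂ)) /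
      ((Real.sqrt n : ℝ) : ℂ)

/-- The geodesic on `U(n)` from the identity to the n-cycle permutation matrix:
`γ(t) = F D(t) F*` with `D(t) = diag(e^{2πikt/n})`. -/
noncomputable def cycleGeodesic (n : ℕ) (t : ℝ) : Matrix (Fin n) (Fin n) ℂ :=
  dftMatrix n *
    Matrix.diagonal (fun k : Fin n =>
      Complex.exp (2 * (Real.pi : ℂ) * Complex.I * ((k : ℕ) : ℂ) * (t : ℂ) / (n : ℂ))) *
    (dftMatrix n)ᴴ

noncomputable def wfn (n : ℕ) (a : ℤ) : ℂ :=
  Complex.exp ((Real.pi : ℂ) * Complex.I * (2 * (a : ℂ) + 1) / (n : ℂ))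

noncomputable def Sfn (n : ℕ) (a : ℤ) : ℂ := (n : ℂ)⁻¹ * ∑ m : Fin n, wfn n a ^ (m : ℕ)

lemma wfn_ne_zero (n : ℕ) (a : ℤ) : wfn n a ≠ 0 := Complex.exp_ne_zero _

lemma wfn_pow_n (n : ℕ) (hn : 0 < n) (a : ℤ) : wfn n a ^ n = -1 := by
  have hn' : (n : ℂ) ≠ 0 := Nat.cast_ne_zero.mpr hn.ne'
  rw [wfn, ← Complex.exp_nat_mul]
  have : (n : ℂ) * ((Real.pi : ℂ) * Complex.I * (2 * (a : ℂ) + 1) / (n : ℂ))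
      = (2 * a + 1 : ℤ) * ((Real.pi : ℂ) * Complex.I) := by
    push_cast; field_simp
  rw [this, Complex.exp_int_mul, Complex.exp_pi_mul_I]
  exact Odd.neg_one_zpow ⟨a, by ring⟩

lemma wfn_conj (n : ℕ) (a : ℤ) : (starRingEnd ℂ) (wfn n a) = (wfn n a)⁻¹ := by
  rw [wfn, ← Complex.exp_conj, ← Complex.exp_neg]
  congr 1
  simp only [map_div₀, _root_.map_mul, map_add, map_ofNat, Complex.conj_I, Complex.conj_ofReal,
    _root_.map_one, map_intCast, map_natCast]
  ring

lemma wfn_period (n : ℕ) (hn : 0 < n) (a : ℤ) : wfn n (a + n) = wfn n a := by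
  have hn' : (n : ℂ) ≠ 0 := Nat.cast_ne_zero.mpr hn.ne'
  rw [wfn, wfn]
  have : (Real.pi : ℂ) * Complex.I * (2 * ((a : ℂ) + (n : ℂ)) + 1) / (n : ℂ)
      = (Real.pi : ℂ) * Complex.I * (2 * (a : ℂ) + 1) / (n : ℂ) + 2 * Real.pi * Complex.I := by
    field_simp; ring
  push_cast
  rw [this, Complex.exp_add, Complex.exp_two_pi_mul_I, mul_one]

lemma entry_eq (n : ℕ) (hn : 0 < n) (j k : Fin n) :
    cycleGeodesic n ((1 : ℝ) / 2) j k = Sfn n ((j : ℤ) - (k : ℤ)) := by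
  have hn' : (n : ℂ) ≠ 0 := Nat.cast_ne_zero.mpr hn.ne'
  have hs : ((Real.sqrt n : ℝ) : ℂ) * ((Real.sqrt n : ℝ) : ℂ) = (n : ℂ) := by
    rw [← Complex.ofReal_mul, Real.mul_self_sqrt (Nat.cast_nonneg n)]
    simp
  rw [cycleGeodesic, Sfn, Matrix.mul_apply, Finset.mul_sum]
  refine Finset.sum_congr rfl fun m _ => ?_
  rw [Matrix.mul_diagonal, Matrix.conjTranspose_apply, dftMatrix, wfn]
  simp only [Matrix.of_apply, Complex.star_def, map_div₀, _root_.map_mul, map_ofNat,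
    Complex.conj_I, Complex.conj_ofReal, map_natCast, ← Complex.exp_conj]
  rw [← Complex.exp_nat_mul]
  have hcomb : ∀ x y z s : ℂ, x / s * y * (z / s) = x * y * z / (s * s) := by
    intros; ring
  rw [hcomb, hs, ← Complex.exp_add, ← Complex.exp_add]
  have harg : 2 * (Real.pi : ℂ) * Complex.I * ((j : ℕ) : ℂ) * ((m : ℕ) : ℂ) / (n : ℂ)
        + 2 * (Real.pi : ℂ) * Complex.I * ((m : ℕ) : ℂ) * (((1 : ℝ) / 2 : ℝ) : ℂ) / (n : ℂ)
        + 2 * (Real.pi : ℂ) * (-Complex.I) * ((k : ℕ) : ℂ) * ((m : ℕ) : ℂ) / (n : ℂ)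
      = ((m : ℕ) : ℂ) * ((Real.pi : ℂ) * Complex.I * (2 * (((j : ℤ) - (k : ℤ) : ℤ) : ℂ) + 1) / (n : ℂ)) := by
    push_cast
    field_simp
    ring
  rw [harg, div_eq_mul_inv, mul_comm]

lemma wfn_neg (n : ℕ) (a : ℤ) : wfn n (-1 - a) = (wfn n a)⁻¹ := by
  rw [wfn, wfn, ← Complex.exp_neg]
  congr 1
  push_cast
  ring

lemma Sfn_conj (n : ℕ) (a : ℤ) :
    (starRingEnd ℂ) (Sfn n a) = (n : ℂ)⁻¹ * ∑ m : Fin n, ((wfn n a)⁻¹) ^ (m : ℕ) := by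
  rw [Sfn, _root_.map_mul, map_inv₀, map_natCast, map_sum]
  simp only [map_pow, wfn_conj]

lemma conj_Sfn_shift (n : ℕ) (a : ℤ) : (starRingEnd ℂ) (Sfn n a) = Sfn n (-1 - a) := by
  rw [Sfn_conj, Sfn, wfn_neg]

lemma conj_Sfn_neg (n : ℕ) (hn : 0 < n) (a : ℤ) :
    (starRingEnd ℂ) (Sfn n a) = -(wfn n a) * Sfn n a := by
  rw [Sfn_conj, Sfn]
  have key : ∑ m : Fin n, ((wfn n a)⁻¹) ^ (m : ℕ)
      = ∑ m : Fin n, -(wfn n a * wfn n a ^ (m : ℕ)) := by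
    rw [← Equiv.sum_comp (Fin.revPerm) (fun m => ((wfn n a)⁻¹) ^ (m : ℕ))]
    refine Finset.sum_congr rfl fun m _ => ?_
    have hadd : ((Fin.revPerm m : Fin n) : ℕ) + ((m : ℕ) + 1) = n := by
      show ((Fin.rev m : Fin n) : ℕ) + ((m : ℕ) + 1) = n
      rw [Fin.val_rev]
      omega
    have h1 : wfn n a ^ ((Fin.revPerm m : Fin n) : ℕ) * wfn n a ^ ((m : ℕ) + 1) = -1 := by
      rw [← pow_add, hadd, wfn_pow_n n hn]
    have hne : wfn n a ^ ((m : ℕ) + 1) ≠ 0 := pow_ne_zero _ (wfn_ne_zero n a)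
    have h2 : wfn n a ^ ((Fin.revPerm m : Fin n) : ℕ) = -1 / wfn n a ^ ((m : ℕ) + 1) :=
      eq_div_of_mul_eq hne h1
    rw [inv_pow, h2, inv_div]
    rw [pow_succ]
    field_simp
  rw [key, Finset.sum_neg_distrib, ← Finset.mul_sum]
  ring

lemma wfn_period_int (n : ℕ) (hn : 0 < n) (a : ℤ) (t : ℤ) :
    wfn n (a + n * t) = wfn n a := by
  have hn' : (n : ℂ) ≠ 0 := Nat.cast_ne_zero.mpr hn.ne'
  rw [wfn, wfn]
  have harg : (Real.pi : ℂ) * Complex.I * (2 * (((a + n * t : ℤ) : ℤ) : ℂ) + 1) / (n : ℂ)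
      = (Real.pi : ℂ) * Complex.I * (2 * (a : ℂ) + 1) / (n : ℂ)
        + (t : ℤ) * (2 * (Real.pi : ℂ) * Complex.I) := by
    push_cast
    field_simp
    ring
  rw [harg, Complex.exp_add, Complex.exp_int_mul_two_pi_mul_I, mul_one]

lemma Sfn_period_int (n : ℕ) (hn : 0 < n) (a : ℤ) (t : ℤ) :
    Sfn n (a + n * t) = Sfn n a := by
  rw [Sfn, Sfn, wfn_period_int n hn]

lemma val_add_one_int (n : ℕ) [NeZero n] (hn : 2 ≤ n) (x : Fin n) :
    ∃ t : ℤ, (((x + 1 : Fin n) : ℕ) : ℤ) = ((x : ℕ) : ℤ) + 1 + (n : ℤ) * t := by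
  refine ⟨-((((x : ℕ) + 1) / n : ℕ) : ℤ), ?_⟩
  have hone : (1 : ℕ) % n = 1 := Nat.mod_eq_of_lt (by omega)
  have h1 : ((x + 1 : Fin n) : ℕ) = ((x : ℕ) + 1) % n := by
    rw [Fin.val_add, Fin.val_one', hone]
  have h2 := Nat.mod_add_div ((x : ℕ) + 1) n
  rw [h1]
  have h3 : (((((x : ℕ) + 1) % n : ℕ)) : ℤ) + (n : ℤ) * ((((x : ℕ) + 1) / n : ℕ) : ℤ)
      = ((x : ℕ) : ℤ) + 1 := by exact_mod_cast congrArg (Nat.cast : ℕ → ℤ) h2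
  linarith

/-- For even `n`, the permanent at the midpoint of the cycle geodesic vanishes. -/
theorem permanent_cycleGeodesic_half_of_even (n : ℕ) (hn : 2 ≤ n) (hev : Even n) :
    (cycleGeodesic n ((1 : ℝ) / 2)).permanent = 0 := by
  have hn0 : 0 < n := by omega
  haveI : NeZero n := ⟨hn0.ne'⟩
  have hn' : (n : ℂ) ≠ 0 := Nat.cast_ne_zero.mpr hn0.ne'
  set A := cycleGeodesic n ((1 : ℝ) / 2) with hAdef
  have hA : ∀ j k : Fin n, A j k = Sfn n (((j : ℕ) : ℤ) - ((k : ℕ) : ℤ)) :=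
    fun j k => entry_eq n hn0 j k
  have himag : (starRingEnd ℂ) A.permanent = -A.permanent := by
    rw [Matrix.permanent, map_sum, ← Finset.sum_neg_distrib]
    refine Finset.sum_congr rfl fun σ _ => ?_
    rw [map_prod]
    have hterm : ∀ i : Fin n, (starRingEnd ℂ) (A (σ i) i)
        = -wfn n ((((σ i : Fin n) : ℕ) : ℤ) - ((i : ℕ) : ℤ)) * A (σ i) i := by
      intro i
      rw [hA, conj_Sfn_neg n hn0, ← hA]
    rw [Finset.prod_congr rfl fun i _ => hterm i, Finset.prod_mul_distrib]
    have hw : (∏ i : Fin n, -wfn n ((((σ i : Fin n) : ℕ) : ℤ) - ((i : ℕ) : ℤ))) = -1 := by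
      have h1 : ∀ i : Fin n, -wfn n ((((σ i : Fin n) : ℕ) : ℤ) - ((i : ℕ) : ℤ))
          = (-1) * Complex.exp ((Real.pi : ℂ) * Complex.I *
              (2 * ((((((σ i : Fin n) : ℕ) : ℤ) - ((i : ℕ) : ℤ)) : ℤ) : ℂ) + 1) / (n : ℂ)) := by
        intro i
        rw [wfn]
        ring
      rw [Finset.prod_congr rfl fun i _ => h1 i, Finset.prod_mul_distrib, Finset.prod_const,
        ← Complex.exp_sum]
      have hcard : (Finset.univ : Finset (Fin n)).card = n := by simp
      have hzero : ∑ i : Fin n, ((((((σ i : Fin n) : ℕ) : ℤ) - ((i : ℕ) : ℤ)) : ℤ) : ℂ) = 0 := by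
        push_cast
        rw [Finset.sum_sub_distrib, sub_eq_zero]
        exact Equiv.sum_comp σ (fun i : Fin n => (((i : Fin n) : ℕ) : ℂ))
      have hexp : ∀ i : Fin n, (Real.pi : ℂ) * Complex.I *
              (2 * ((((((σ i : Fin n) : ℕ) : ℤ) - ((i : ℕ) : ℤ)) : ℤ) : ℂ) + 1) / (n : ℂ)
          = (2 * (Real.pi : ℂ) * Complex.I / (n : ℂ)) *
              ((((((σ i : Fin n) : ℕ) : ℤ) - ((i : ℕ) : ℤ)) : ℤ) : ℂ)
            + (Real.pi : ℂ) * Complex.I / (n : ℂ) := by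
        intro i
        ring
      rw [Finset.sum_congr rfl fun i _ => hexp i, Finset.sum_add_distrib, ← Finset.mul_sum,
        hzero, mul_zero, zero_add, Finset.sum_const, hcard, nsmul_eq_mul]
      have : (n : ℂ) * ((Real.pi : ℂ) * Complex.I / (n : ℂ)) = (Real.pi : ℂ) * Complex.I := by
        field_simp
      rw [this, Complex.exp_pi_mul_I, Even.neg_one_pow hev, one_mul]
    rw [hw, neg_one_mul]
  have hreal : (starRingEnd ℂ) A.permanent = A.permanent := by
    have key : ∀ σ : Equiv.Perm (Fin n), (starRingEnd ℂ) (∏ i, A (σ i) i)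
        = ∏ i, Aᵀ (((Equiv.addRight (1 : Fin n) : Equiv.Perm (Fin n)) * σ) i) i := by
      intro σ
      rw [map_prod]
      refine Finset.prod_congr rfl fun i _ => ?_
      have hmul : (((Equiv.addRight (1 : Fin n) : Equiv.Perm (Fin n)) * σ) i) = σ i + 1 := rfl
      rw [hmul, Matrix.transpose_apply, hA, hA, conj_Sfn_shift n]
      obtain ⟨t, ht⟩ := val_add_one_int n hn (σ i)
      have harg : ((i : ℕ) : ℤ) - (((σ i + 1 : Fin n) : ℕ) : ℤ)
          = (-1 - ((((σ i : Fin n) : ℕ) : ℤ) - ((i : ℕ) : ℤ))) + (n : ℤ) * (-t) := by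
        rw [ht]
        ring
      rw [harg, Sfn_period_int n hn0]
    rw [Matrix.permanent, map_sum, Finset.sum_congr rfl fun σ _ => key σ]
    have hb := Group.mulLeft_bijective ((Equiv.addRight (1 : Fin n)) : Equiv.Perm (Fin n))
    have := hb.sum_comp (fun τ : Equiv.Perm (Fin n) => ∏ i, Aᵀ (τ i) i)
    rw [this, ← Matrix.permanent, Matrix.permanent_transpose, Matrix.permanent]
  linear_combination (himag - hreal) / 2
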